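/- Let X↕ = (V0•, V1•, E↕) and X↔ = (V•0, V•1, E↔) be bipartite graphs with free G-invariant actions, and form the balanced product X↕ ×_G X↔. If X↕ is a 1-sided (c↕, ε↕)-lossless expander from V0• to V1• and X↔ is a 1-sided (c↔, ε↔)-lossless expander from V•0 to V•1, then: (V00, V10, E•0) is a 1-sided (c↕·|V0•|/|V00|, ε↕)-lossless expander from V00 to V10; (V01, V11, E•1) is a 1-sided (c↕·|V0•|/|V01|, ε↕)-lossless expander from V01 to V11; (V00, V01, E0•) is a 1-sided (c↔·|V•0|/|V00|, ε↔)-lossless expander from V00 to V01; and (V10, V11, E1•) is a 1-sided (c↔·|V•0|/|V10|, ε↔)-lossless expander from V10 to V11. -/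
import Mathlib


open scoped Classical

noncomputable section

/-- Vertex set of the balanced product: orbits of the diagonal `G`-action on `A × B`. -/
abbrev BPV (G : Type*) [Group G] (A B : Type*) [MulAction G A] [MulAction G B] :=
  Quotient (MulAction.orbitRel G (A × B))

/-- The orbit `[(a, b)]` as a balanced-product vertex. -/
def bpmk (G : Type*) [Group G] {A B : Type*} [MulAction G A] [MulAction G B]
    (a : A) (b : B) : BPV G A B :=
  Quotient.mk (MulAction.orbitRel G (A × B)) (a, b)

/-- Vertical edges of the balanced product: pairs `([x0, y], [x1, y])` with `(x0, x1)`
an edge of the first factor. -/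
def EV (G : Type*) [Group G] {A0 A1 B : Type*}
    [MulAction G A0] [MulAction G A1] [MulAction G B]
    (Eud : A0 → A1 → Prop) (z0 : BPV G A0 B) (z1 : BPV G A1 B) : Prop :=
  ∃ (x0 : A0) (x1 : A1) (y : B), Eud x0 x1 ∧ z0 = bpmk G x0 y ∧ z1 = bpmk G x1 y

/-- Horizontal edges of the balanced product: pairs `([x, y0], [x, y1])` with `(y0, y1)`
an edge of the second factor. -/
def EH (G : Type*) [Group G] {A B0 B1 : Type*}
    [MulAction G A] [MulAction G B0] [MulAction G B1]
    (Elr : B0 → B1 → Prop) (z0 : BPV G A B0) (z1 : BPV G A B1) : Prop :=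
  ∃ (x : A) (y0 : B0) (y1 : B1), Elr y0 y1 ∧ z0 = bpmk G x y0 ∧ z1 = bpmk G x y1

/-- The degree of a vertex `x : V0` in a bipartite graph with edge relation `E`. -/
def degL {V0 V1 : Type*} [Fintype V1] (E : V0 → V1 → Prop) (x : V0) : ℕ :=
  (Finset.univ.filter fun y => E x y).card

/-- The set of neighbors in `V1` of a subset `S ⊆ V0`. -/
def nbhd {V0 V1 : Type*} [Fintype V1] (E : V0 → V1 → Prop) (S : Finset V0) : Finset V1 :=
  Finset.univ.filter fun y => ∃ x ∈ S, E x y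

/-- A bipartite graph is a 1-sided `(c, ε)`-lossless expander from `V0` to `V1` (with
`V0`-side degree `w0`) if it is left `w0`-regular and every `S ⊆ V0` with `|S| < c·|V0|`
satisfies `|N(S)| ≥ (1 − ε)·w0·|S|`. -/
def OneSidedLossless {V0 V1 : Type*} [Fintype V0] [Fintype V1]
    (E : V0 → V1 → Prop) (w0 : ℕ) (c ε : ℝ) : Prop :=
  (∀ x : V0, degL E x = w0) ∧
  ∀ S : Finset V0, (S.card : ℝ) < c * Fintype.card V0 →
    (1 - ε) * w0 * S.card ≤ ((nbhd E S).card : ℝ)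

section Helpers
variable {G : Type*} [Group G]

lemma bpmk_eq_iff {G : Type*} [Group G] {A B : Type*} [MulAction G A] [MulAction G B]
    {x x' : A} {y y' : B} :
    bpmk G x y = bpmk G x' y' ↔ ∃ g : G, g • x' = x ∧ g • y' = y := by
  constructor
  · intro h
    obtain ⟨g, hg⟩ := Quotient.exact h
    exact ⟨g, by simpa [Prod.ext_iff] using hg⟩
  · rintro ⟨g, h1, h2⟩
    exact Quotient.sound ⟨g, Prod.ext h1 h2⟩

section Equivs
variable {G : Type*} [Group G]

/-- If two `out`s are in the same orbit, the classes agree. -/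

lemma out_eq_of_smul {B : Type*} [MulAction G B]
    {i j : Quotient (MulAction.orbitRel G B)} {g : G} (h : g • j.out = i.out) : i = j := by
  have : Quotient.mk (MulAction.orbitRel G B) i.out
      = Quotient.mk (MulAction.orbitRel G B) j.out := Quotient.sound ⟨g, h⟩
  rw [Quotient.out_eq, Quotient.out_eq] at this
  exact this

lemma bij_left {A B : Type*} [MulAction G A] [MulAction G B]
    (hfree : ∀ (g : G) (y : B), g • y = y → g = 1) :
    Function.Bijective (fun p : A × Quotient (MulAction.orbitRel G B) =>
      bpmk G p.1 p.2.out) := by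
  constructor
  · rintro ⟨x, i⟩ ⟨x', j⟩ h
    obtain ⟨g, hx, hy⟩ := bpmk_eq_iff.mp h
    obtain rfl : i = j := out_eq_of_smul hy
    have hg1 : g = 1 := hfree g i.out (by simpa using hy)
    subst hg1
    simpa using hx.symm
  · intro z
    obtain ⟨⟨x, y⟩, rfl⟩ := Quotient.exists_rep z
    set i := Quotient.mk (MulAction.orbitRel G B) y with hi
    have hq : Quotient.mk (MulAction.orbitRel G B) i.out
        = Quotient.mk (MulAction.orbitRel G B) y := by rw [hi, Quotient.out_eq]
    obtain ⟨g, hg⟩ : ∃ g : G, g • y = i.out := Quotient.exact hq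
    exact ⟨(g • x, i), by
      show bpmk G (g • x) i.out = _
      exact bpmk_eq_iff.mpr ⟨g, rfl, hg⟩⟩

lemma bij_right {A B : Type*} [MulAction G A] [MulAction G B]
    (hfree : ∀ (g : G) (x : A), g • x = x → g = 1) :
    Function.Bijective (fun p : B × Quotient (MulAction.orbitRel G A) =>
      bpmk G p.2.out p.1) := by
  constructor
  · rintro ⟨y, i⟩ ⟨y', j⟩ h
    obtain ⟨g, hx, hy⟩ := bpmk_eq_iff.mp h
    obtain rfl : i = j := out_eq_of_smul hx
    have hg1 : g = 1 := hfree g i.out (by simpa using hx)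
    subst hg1
    simpa using hy.symm
  · intro z
    obtain ⟨⟨x, y⟩, rfl⟩ := Quotient.exists_rep z
    set i := Quotient.mk (MulAction.orbitRel G A) x with hi
    have hq : Quotient.mk (MulAction.orbitRel G A) i.out
        = Quotient.mk (MulAction.orbitRel G A) x := by rw [hi, Quotient.out_eq]
    obtain ⟨g, hg⟩ : ∃ g : G, g • x = i.out := Quotient.exact hq
    exact ⟨(g • y, i), by
      show bpmk G i.out (g • y) = _
      exact bpmk_eq_iff.mpr ⟨g, hg, rfl⟩⟩
end Equivs

lemma EV_iff {G A0 A1 B : Type*} [Group G]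
    [MulAction G A0] [MulAction G A1] [MulAction G B]
    (Eud : A0 → A1 → Prop)
    (hinv : ∀ (g : G) (x0 : A0) (x1 : A1), Eud x0 x1 → Eud (g • x0) (g • x1))
    (hfreeB : ∀ (g : G) (y : B), g • y = y → g = 1)
    (x : A0) (i : Quotient (MulAction.orbitRel G B))
    (x' : A1) (i' : Quotient (MulAction.orbitRel G B)) :
    EV G Eud (bpmk G x i.out) (bpmk G x' i'.out) ↔ Eud x x' ∧ i = i' := by
  constructor
  · rintro ⟨x0, x1, y, hE, h0, h1⟩
    obtain ⟨g, hgx, hgy⟩ := bpmk_eq_iff.mp h0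
    obtain ⟨h, hhx, hhy⟩ := bpmk_eq_iff.mp h1
    obtain rfl : i = i' := by
      refine out_eq_of_smul (g := g * h⁻¹) ?_
      rw [← hhy, mul_smul, inv_smul_smul, hgy]
    obtain rfl : h = g := by
      refine mul_inv_eq_one.mp (hfreeB (h * g⁻¹) i.out ?_)
      rw [← hgy, mul_smul, inv_smul_smul, hhy, hgy]
    exact ⟨by rw [← hgx, ← hhx]; exact hinv h x0 x1 hE, rfl⟩
  · rintro ⟨hE, rfl⟩
    exact ⟨x, x', i.out, hE, rfl, rfl⟩

lemma EH_iff {G A B0 B1 : Type*} [Group G]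
    [MulAction G A] [MulAction G B0] [MulAction G B1]
    (Elr : B0 → B1 → Prop)
    (hinv : ∀ (g : G) (y0 : B0) (y1 : B1), Elr y0 y1 → Elr (g • y0) (g • y1))
    (hfreeA : ∀ (g : G) (x : A), g • x = x → g = 1)
    (y : B0) (i : Quotient (MulAction.orbitRel G A))
    (y' : B1) (i' : Quotient (MulAction.orbitRel G A)) :
    EH G Elr (bpmk G i.out y) (bpmk G i'.out y') ↔ Elr y y' ∧ i = i' := by
  constructor
  · rintro ⟨a, y0, y1, hE, h0, h1⟩
    obtain ⟨g, hgx, hgy⟩ := bpmk_eq_iff.mp h0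
    obtain ⟨h, hhx, hhy⟩ := bpmk_eq_iff.mp h1
    obtain rfl : i = i' := by
      refine out_eq_of_smul (g := g * h⁻¹) ?_
      rw [← hhx, mul_smul, inv_smul_smul, hgx]
    obtain rfl : h = g := by
      refine mul_inv_eq_one.mp (hfreeA (h * g⁻¹) i.out ?_)
      rw [← hgx, mul_smul, inv_smul_smul, hhx, hgx]
    exact ⟨by rw [← hgy, ← hhy]; exact hinv h y0 y1 hE, rfl⟩
  · rintro ⟨hE, rfl⟩
    exact ⟨i.out, y, y', hE, rfl, rfl⟩

def fiberEquiv {V1 I : Type*} (P : V1 → Prop) (i : I) :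
    {a : V1 × I // P a.1 ∧ i = a.2} ≃ {x' : V1 // P x'} where
  toFun a := ⟨a.1.1, a.2.1⟩
  invFun x' := ⟨(x'.1, i), x'.2, rfl⟩
  left_inv := by
    rintro ⟨⟨a, b⟩, hp, h2⟩
    exact Subtype.ext (Prod.ext rfl h2)
  right_inv := by rintro ⟨a, ha⟩; rfl

lemma lossless_of_fiberwise {V0 V1 I W0 W1 : Type*}
    [Fintype V0] [Fintype V1] [Fintype I] [Fintype W0] [Fintype W1]
    (E : V0 → V1 → Prop) (E' : W0 → W1 → Prop)
    (e0 : V0 × I ≃ W0) (e1 : V1 × I ≃ W1)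
    (h : ∀ x i x' i', E' (e0 (x, i)) (e1 (x', i')) ↔ E x x' ∧ i = i')
    {w : ℕ} {c ε : ℝ} (hloss : OneSidedLossless E w c ε) :
    OneSidedLossless E' w (c * Fintype.card V0 / Fintype.card W0) ε := by
  constructor
  · intro z
    obtain ⟨⟨x, i⟩, rfl⟩ := e0.surjective z
    rw [← hloss.1 x]
    unfold degL
    rw [← Fintype.card_subtype, ← Fintype.card_subtype]
    refine Fintype.card_congr ?_
    refine (Equiv.trans ?_ (fiberEquiv (E x) i))
    exact (e1.subtypeEquiv (p := fun a : V1 × I => E x a.1 ∧ i = a.2)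
      (q := fun z' => E' (e0 (x, i)) z') fun a => (h x i a.1 a.2).symm).symm
  · intro S hS
    by_cases hW : Fintype.card W0 = 0
    · exfalso
      rw [hW] at hS
      simp only [Nat.cast_zero, mul_zero] at hS
      exact (Nat.cast_nonneg (α := ℝ) S.card).not_gt hS
    have hS' : (S.card : ℝ) < c * Fintype.card V0 := by
      have h0 : (Fintype.card W0 : ℝ) ≠ 0 := Nat.cast_ne_zero.mpr hW
      rwa [div_mul_cancel₀ _ h0] at hS
    set T : Finset (V0 × I) := S.image e0.symm with hT
    have hTcard : T.card = S.card := Finset.card_image_of_injective _ e0.symm.injective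
    set Ti : I → Finset (V0 × I) := fun i => T.filter fun q => q.2 = i with hTi
    have hsum : T.card = ∑ i, (Ti i).card :=
      Finset.card_eq_sum_card_fiberwise (fun q _ => Finset.mem_univ q.2)
    set Pi : I → Finset V0 := fun i => (Ti i).image Prod.fst with hPi
    have hPicard : ∀ i, (Pi i).card = (Ti i).card := by
      intro i
      refine Finset.card_image_of_injOn ?_
      rintro ⟨a, b⟩ ha ⟨a', b'⟩ ha' (hab : a = a')
      have hb : b = i := (Finset.mem_filter.mp ha).2
      have hb' : b' = i := (Finset.mem_filter.mp ha').2
      simp [hab, hb, hb']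
    have hexp : ∀ i, (1 - ε) * w * ((Ti i).card : ℝ) ≤ ((nbhd E (Pi i)).card : ℝ) := by
      intro i
      have hle : ((Pi i).card : ℝ) < c * Fintype.card V0 := by
        refine lt_of_le_of_lt ?_ hS'
        have : (Pi i).card ≤ S.card := by
          rw [hPicard, ← hTcard]
          exact Finset.card_le_card (Finset.filter_subset _ _)
        exact_mod_cast this
      have hh := hloss.2 (Pi i) hle
      rwa [hPicard i] at hh
    set Bf : I → Finset W1 := fun i => (nbhd E (Pi i)).image fun x' => e1 (x', i) with hBf
    have hBcard : ∀ i, (Bf i).card = (nbhd E (Pi i)).card := by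
      intro i
      refine Finset.card_image_of_injective _ fun a b hab => ?_
      exact congrArg Prod.fst (e1.injective hab)
    have hdisj : ∀ i ∈ Finset.univ, ∀ j ∈ Finset.univ, i ≠ j → Disjoint (Bf i) (Bf j) := by
      intro i _ j _ hij
      refine Finset.disjoint_left.mpr fun z hz hz' => ?_
      obtain ⟨a, -, rfl⟩ := Finset.mem_image.mp hz
      obtain ⟨b, -, hb⟩ := Finset.mem_image.mp hz'
      exact hij (congrArg Prod.snd (e1.injective hb)).symm
    have hsub : (Finset.univ.biUnion Bf) ⊆ nbhd E' S := by
      intro z hz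
      obtain ⟨i, -, hzi⟩ := Finset.mem_biUnion.mp hz
      obtain ⟨x', hx', rfl⟩ := Finset.mem_image.mp hzi
      obtain ⟨x, hxPi, hExy⟩ := (Finset.mem_filter.mp hx').2
      obtain ⟨q, hq, hq1⟩ := Finset.mem_image.mp hxPi
      have hq2 : q.2 = i := (Finset.mem_filter.mp hq).2
      have hqT : q ∈ T := (Finset.mem_filter.mp hq).1
      obtain ⟨s, hs, hsq⟩ := Finset.mem_image.mp hqT
      have hsval : s = e0 (x, i) := by
        rw [← hq1, ← hq2]
        exact (Equiv.symm_apply_eq e0).mp hsq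
      refine Finset.mem_filter.mpr ⟨Finset.mem_univ _, ⟨s, hs, ?_⟩⟩
      rw [hsval]
      exact (h x i x' i).mpr ⟨hExy, rfl⟩
    calc (1 - ε) * w * S.card
        = ∑ i, (1 - ε) * w * ((Ti i).card : ℝ) := by
          rw [← Finset.mul_sum]
          congr 1
          rw [← hTcard, hsum]
          push_cast
          rfl
      _ ≤ ∑ i, ((nbhd E (Pi i)).card : ℝ) := Finset.sum_le_sum fun i _ => hexp i
      _ = ((Finset.univ.biUnion Bf).card : ℝ) := by
          rw [Finset.card_biUnion hdisj]
          push_cast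
          exact Finset.sum_congr rfl fun i _ => by rw [hBcard i]
      _ ≤ ((nbhd E' S).card : ℝ) := Nat.cast_le.mpr (Finset.card_le_card hsub)

end Helpers

/-- **1-sided lossless expansion passes to the one-dimensional subgraphs of a balanced
product**, with the expansion cutoff rescaled by the ratio of vertex counts. -/
theorem balanced_product_subgraphs_lossless
    {G V0a V1a Vb0 Vb1 : Type*} [Group G]
    [Fintype V0a] [Fintype V1a] [Fintype Vb0] [Fintype Vb1]
    [MulAction G V0a] [MulAction G V1a] [MulAction G Vb0] [MulAction G Vb1]
    (Eud : V0a → V1a → Prop) (Elr : Vb0 → Vb1 → Prop)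
    (wd wu wr wl : ℕ) (cud εud clr εlr : ℝ)
    (hfree0a : ∀ (g : G) (x : V0a), g • x = x → g = 1)
    (hfree1a : ∀ (g : G) (x : V1a), g • x = x → g = 1)
    (hfreeb0 : ∀ (g : G) (y : Vb0), g • y = y → g = 1)
    (hfreeb1 : ∀ (g : G) (y : Vb1), g • y = y → g = 1)
    (hinvud : ∀ (g : G) (x0 : V0a) (x1 : V1a), Eud x0 x1 → Eud (g • x0) (g • x1))
    (hinvlr : ∀ (g : G) (y0 : Vb0) (y1 : Vb1), Elr y0 y1 → Elr (g • y0) (g • y1))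
    (hlossud : OneSidedLossless Eud wd cud εud)
    (hlosslr : OneSidedLossless Elr wr clr εlr) :
    OneSidedLossless (EV G Eud : BPV G V0a Vb0 → BPV G V1a Vb0 → Prop) wd
      (cud * Fintype.card V0a / Fintype.card (BPV G V0a Vb0)) εud ∧
    OneSidedLossless (EV G Eud : BPV G V0a Vb1 → BPV G V1a Vb1 → Prop) wd
      (cud * Fintype.card V0a / Fintype.card (BPV G V0a Vb1)) εud ∧
    OneSidedLossless (EH G Elr : BPV G V0a Vb0 → BPV G V0a Vb1 → Prop) wr
      (clr * Fintype.card Vb0 / Fintype.card (BPV G V0a Vb0)) εlr ∧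
    OneSidedLossless (EH G Elr : BPV G V1a Vb0 → BPV G V1a Vb1 → Prop) wr
      (clr * Fintype.card Vb0 / Fintype.card (BPV G V1a Vb0)) εlr := by
  refine ⟨?_, ?_, ?_, ?_⟩
  · exact lossless_of_fiberwise Eud _ (Equiv.ofBijective _ (bij_left (A := V0a) hfreeb0))
      (Equiv.ofBijective _ (bij_left (A := V1a) hfreeb0))
      (fun x i x' i' => EV_iff Eud hinvud hfreeb0 x i x' i') hlossud
  · exact lossless_of_fiberwise Eud _ (Equiv.ofBijective _ (bij_left (A := V0a) hfreeb1))
      (Equiv.ofBijective _ (bij_left (A := V1a) hfreeb1))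
      (fun x i x' i' => EV_iff Eud hinvud hfreeb1 x i x' i') hlossud
  · exact lossless_of_fiberwise Elr _ (Equiv.ofBijective _ (bij_right (B := Vb0) hfree0a))
      (Equiv.ofBijective _ (bij_right (B := Vb1) hfree0a))
      (fun y i y' i' => EH_iff Elr hinvlr hfree0a y i y' i') hlosslr
  · exact lossless_of_fiberwise Elr _ (Equiv.ofBijective _ (bij_right (B := Vb0) hfree1a))
      (Equiv.ofBijective _ (bij_right (B := Vb1) hfree1a))
      (fun y i y' i' => EH_iff Elr hinvlr hfree1a y i y' i') hlosslr
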